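/- For every draw size K ≥ 2 and every number of objects I ≥ 2, there exist probability vectors p and q on I objects with p ≠ q such that E[D(p,p)] > E[D(p,q)]; for instance p = (4/5, 1/5, 0, …, 0) and q = (9/10, 1/10, 0, …, 0) satisfy E[D(p,p)] = 0.32 > 0.26 = E[D(p,q)]. -/
import Mathlib
open Finset
noncomputable def expectedDissim (K I : ℕ) (p q : Fin I → ℝ) : ℝ :=
  ∑ X₁ : Fin K → Fin I, ∑ X₂ : Fin K → Fin I,
    ((∏ k, p (X₁ k)) * (∏ k, q (X₂ k))) *
      (1 - (1 / (K : ℝ) ^ 2) *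
        ∑ i : Fin I, ((Finset.univ.filter fun k => X₁ k = i).card : ℝ) *
          ((Finset.univ.filter fun k => X₂ k = i).card : ℝ))


lemma sum_prod_eq_one {K I : ℕ} (p : Fin I → ℝ) (hp : ∑ j, p j = 1) :
    ∑ X : Fin K → Fin I, ∏ k, p (X k) = 1 := by
  rw [← Fintype.piFinset_univ, ← Finset.prod_univ_sum]
  simp [hp]

lemma sum_prod_count {K I : ℕ} (p : Fin I → ℝ) (hp : ∑ j, p j = 1) (i : Fin I) :
    ∑ X : Fin K → Fin I, (∏ k, p (X k)) * ((univ.filter fun k => X k = i).card : ℝ)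
      = K * p i := by
  have hcard : ∀ X : Fin K → Fin I, ((univ.filter fun k => X k = i).card : ℝ)
      = ∑ k, if X k = i then (1:ℝ) else 0 := by
    intro X
    rw [Finset.card_filter]
    push_cast [apply_ite (Nat.cast : ℕ → ℝ)]
    rfl
  calc ∑ X : Fin K → Fin I, (∏ k, p (X k)) * ((univ.filter fun k => X k = i).card : ℝ)
      = ∑ k : Fin K, ∑ X : Fin K → Fin I,
          (if X k = i then (1:ℝ) else 0) * ∏ k', p (X k') := by
        rw [Finset.sum_comm]
        refine Finset.sum_congr rfl fun X _ => ?_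
        rw [hcard, Finset.mul_sum]
        exact Finset.sum_congr rfl fun k _ => mul_comm _ _
    _ = ∑ k : Fin K, ∑ X : Fin K → Fin I,
          ∏ k', (if k' = k then (if X k' = i then p (X k') else 0) else p (X k')) := by
        refine Finset.sum_congr rfl fun k _ => Finset.sum_congr rfl fun X _ => ?_
        by_cases h : X k = i
        · simp only [h, if_true, one_mul]
          refine (Finset.prod_congr rfl fun k' _ => ?_)
          by_cases hk : k' = k
          · simp [hk, h]
          · simp [hk]
        · simp only [h, if_false, zero_mul]
          exact (Finset.prod_eq_zero (Finset.mem_univ k) (by simp [h])).symm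
    _ = ∑ k : Fin K, ∏ k' : Fin K,
          ∑ j : Fin I, (if k' = k then (if j = i then p j else 0) else p j) := by
        refine Finset.sum_congr rfl fun k _ => ?_
        rw [Finset.prod_univ_sum (t := fun _ => (univ : Finset (Fin I)))
          (f := fun k' j => if k' = k then (if j = i then p j else 0) else p j),
          Fintype.piFinset_univ]
    _ = ∑ k : Fin K, ∏ k' : Fin K, (if k' = k then p i else 1) := by
        refine Finset.sum_congr rfl fun k _ => Finset.prod_congr rfl fun k' _ => ?_
        by_cases hk : k' = k <;> simp [hk, hp, Finset.sum_ite_eq']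
    _ = ∑ k : Fin K, p i := by
        refine Finset.sum_congr rfl fun k _ => ?_
        simp [Finset.prod_ite_eq']
    _ = K * p i := by simp [mul_comm]

lemma double_sum_split {α β γ : Type*} [Fintype α] [Fintype β] [Fintype γ]
    (f : α → ℝ) (g : β → ℝ) (c : ℝ) (a : α → γ → ℝ) (b : β → γ → ℝ) :
    ∑ x : α, ∑ y : β, (f x * g y - c * ∑ i : γ, a x i * b y i)
      = (∑ x, f x) * (∑ y, g y) - c * ∑ i : γ, (∑ x, a x i) * (∑ y, b y i) := by
  have h1 : ∑ x : α, ∑ y : β, f x * g y = (∑ x, f x) * (∑ y, g y) := by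
    rw [Finset.sum_mul]
    exact Finset.sum_congr rfl fun x _ => by rw [Finset.mul_sum]
  have h2 : ∑ x : α, ∑ y : β, (c * ∑ i : γ, a x i * b y i)
      = c * ∑ i : γ, (∑ x, a x i) * (∑ y, b y i) := by
    rw [Finset.mul_sum]
    calc ∑ x : α, ∑ y : β, (c * ∑ i : γ, a x i * b y i)
        = ∑ x : α, ∑ i : γ, c * (a x i * ∑ y, b y i) := by
          refine Finset.sum_congr rfl fun x _ => ?_
          simp_rw [Finset.mul_sum]
          rw [Finset.sum_comm]
      _ = ∑ i : γ, c * ((∑ x, a x i) * ∑ y, b y i) := by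
          rw [Finset.sum_comm]
          refine Finset.sum_congr rfl fun i _ => ?_
          rw [Finset.sum_mul, Finset.mul_sum]
  simp_rw [Finset.sum_sub_distrib, h1, h2]

lemma expectedDissim_eq (K I : ℕ) (hK : K ≠ 0) (p q : Fin I → ℝ)
    (hp : ∑ i, p i = 1) (hq : ∑ i, q i = 1) :
    expectedDissim K I p q = 1 - ∑ i, p i * q i := by
  have hK' : (K:ℝ) ≠ 0 := Nat.cast_ne_zero.mpr hK
  unfold expectedDissim
  have expand : ∀ X₁ X₂ : Fin K → Fin I,
      ((∏ k, p (X₁ k)) * (∏ k, q (X₂ k))) *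
      (1 - (1 / (K : ℝ) ^ 2) *
        ∑ i : Fin I, ((univ.filter fun k => X₁ k = i).card : ℝ) *
          ((univ.filter fun k => X₂ k = i).card : ℝ))
      = (∏ k, p (X₁ k)) * (∏ k, q (X₂ k)) -
        (1 / (K : ℝ) ^ 2) * ∑ i : Fin I,
          ((∏ k, p (X₁ k)) * ((univ.filter fun k => X₁ k = i).card : ℝ)) *
          ((∏ k, q (X₂ k)) * ((univ.filter fun k => X₂ k = i).card : ℝ)) := by
    intro X₁ X₂
    rw [mul_sub, mul_one, Finset.mul_sum, Finset.mul_sum]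
    congr 1
    rw [Finset.mul_sum]
    refine Finset.sum_congr rfl fun i _ => ?_
    ring
  calc ∑ X₁ : Fin K → Fin I, ∑ X₂ : Fin K → Fin I,
        ((∏ k, p (X₁ k)) * (∏ k, q (X₂ k))) *
        (1 - (1 / (K : ℝ) ^ 2) *
          ∑ i : Fin I, ((univ.filter fun k => X₁ k = i).card : ℝ) *
            ((univ.filter fun k => X₂ k = i).card : ℝ))
      = ∑ X₁ : Fin K → Fin I, ∑ X₂ : Fin K → Fin I,
          ((∏ k, p (X₁ k)) * (∏ k, q (X₂ k)) -
            (1 / (K : ℝ) ^ 2) * ∑ i : Fin I,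
              ((∏ k, p (X₁ k)) * ((univ.filter fun k => X₁ k = i).card : ℝ)) *
              ((∏ k, q (X₂ k)) * ((univ.filter fun k => X₂ k = i).card : ℝ))) :=
        Finset.sum_congr rfl fun X₁ _ => Finset.sum_congr rfl fun X₂ _ => expand X₁ X₂
    _ = (∑ X₁ : Fin K → Fin I, ∏ k, p (X₁ k)) * (∑ X₂ : Fin K → Fin I, ∏ k, q (X₂ k)) -
        (1 / (K : ℝ) ^ 2) * ∑ i : Fin I,
          (∑ X₁ : Fin K → Fin I, (∏ k, p (X₁ k)) * ((univ.filter fun k => X₁ k = i).card : ℝ)) *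
          (∑ X₂ : Fin K → Fin I, (∏ k, q (X₂ k)) * ((univ.filter fun k => X₂ k = i).card : ℝ)) :=
        double_sum_split _ _ _ _ _
    _ = 1 * 1 - (1 / (K : ℝ) ^ 2) * ∑ i : Fin I, ((K:ℝ) * p i) * ((K:ℝ) * q i) := by
        rw [sum_prod_eq_one p hp, sum_prod_eq_one q hq]
        congr 1
        congr 1
        exact Finset.sum_congr rfl fun i _ => by
          rw [sum_prod_count p hp i, sum_prod_count q hq i]
    _ = 1 - ∑ i, p i * q i := by
        have : ∑ i : Fin I, ((K:ℝ) * p i) * ((K:ℝ) * q i) = (K:ℝ)^2 * ∑ i, p i * q i := by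
          rw [Finset.mul_sum]; exact Finset.sum_congr rfl fun i _ => by ring
        rw [this]
        field_simp

lemma sum_two {I : ℕ} (hI : 2 ≤ I) (a b : ℝ) :
    ∑ i : Fin I, (if (i:ℕ) = 0 then a else if (i:ℕ) = 1 then b else 0) = a + b := by
  have h0 : (0:ℕ) < I := by omega
  have h1 : (1:ℕ) < I := by omega
  have key : ∀ i : Fin I, (if (i:ℕ) = 0 then a else if (i:ℕ) = 1 then b else 0)
      = (if i = ⟨0,h0⟩ then a else 0) + (if i = ⟨1,h1⟩ then b else 0) := by
    rintro ⟨v, hv⟩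
    by_cases hv0 : v = 0
    · simp [hv0, Fin.ext_iff]
    · by_cases hv1 : v = 1 <;> simp [hv0, hv1, Fin.ext_iff]
  rw [Finset.sum_congr rfl fun i _ => key i, Finset.sum_add_distrib,
    Finset.sum_ite_eq' _ _ (fun _ => a), Finset.sum_ite_eq' _ _ (fun _ => b)]
  simp

/-- For every `K ≥ 2` and `I ≥ 2` there are probability vectors `p ≠ q` with
`E[D(p,p)] > E[D(p,q)]`; for instance `p = (4/5, 1/5, 0, …, 0)` and
`q = (9/10, 1/10, 0, …, 0)`, which satisfy `E[D(p,p)] = 0.32 > 0.26 = E[D(p,q)]`. -/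
theorem exists_expectedDissim_self_gt (K I : ℕ) (hK : 2 ≤ K) (hI : 2 ≤ I) :
    ∃ p q : Fin I → ℝ,
      (∀ i, 0 ≤ p i) ∧ (∑ i, p i = 1) ∧ (∀ i, 0 ≤ q i) ∧ (∑ i, q i = 1) ∧ p ≠ q ∧
      p = (fun i : Fin I => if (i : ℕ) = 0 then 4/5 else if (i : ℕ) = 1 then 1/5 else (0:ℝ)) ∧
      q = (fun i : Fin I => if (i : ℕ) = 0 then 9/10 else if (i : ℕ) = 1 then 1/10 else (0:ℝ)) ∧
      expectedDissim K I p p = 0.32 ∧ expectedDissim K I p q = 0.26 ∧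
      expectedDissim K I p p > expectedDissim K I p q := by
  set p : Fin I → ℝ := fun i => if (i : ℕ) = 0 then 4/5 else if (i : ℕ) = 1 then 1/5 else 0 with hpdef
  set q : Fin I → ℝ := fun i => if (i : ℕ) = 0 then 9/10 else if (i : ℕ) = 1 then 1/10 else 0 with hqdef
  have hp0 : ∀ i, 0 ≤ p i := by intro i; simp only [hpdef]; split_ifs <;> norm_num
  have hq0 : ∀ i, 0 ≤ q i := by intro i; simp only [hqdef]; split_ifs <;> norm_num
  have hps : ∑ i, p i = 1 := by rw [hpdef, sum_two hI]; norm_num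
  have hqs : ∑ i, q i = 1 := by rw [hqdef, sum_two hI]; norm_num
  have hK0 : K ≠ 0 := by omega
  have hpp : ∑ i, p i * p i = 0.68 := by
    have : ∀ i : Fin I, p i * p i
        = (if (i:ℕ) = 0 then (16/25 : ℝ) else if (i:ℕ) = 1 then 1/25 else 0) := by
      intro i; simp only [hpdef]; split_ifs <;> norm_num
    rw [Finset.sum_congr rfl fun i _ => this i, sum_two hI]; norm_num
  have hpq : ∑ i, p i * q i = 0.74 := by
    have : ∀ i : Fin I, p i * q i
        = (if (i:ℕ) = 0 then (18/25 : ℝ) else if (i:ℕ) = 1 then 1/50 else 0) := by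
      intro i; simp only [hpdef, hqdef]; split_ifs <;> norm_num
    rw [Finset.sum_congr rfl fun i _ => this i, sum_two hI]; norm_num
  have e1 : expectedDissim K I p p = 0.32 := by
    rw [expectedDissim_eq K I hK0 p p hps hps, hpp]; norm_num
  have e2 : expectedDissim K I p q = 0.26 := by
    rw [expectedDissim_eq K I hK0 p q hps hqs, hpq]; norm_num
  have hne : p ≠ q := by
    intro h
    have := congrFun h ⟨0, by omega⟩
    simp [hpdef, hqdef] at this
    norm_num at this
  exact ⟨p, q, hp0, hps, hq0, hqs, hne, rfl, rfl, e1, e2, by rw [e1, e2]; norm_num⟩
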